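/- arXiv:0707.1787 — 2 statements merged into one kernel-verified Lean document; each statement's English description precedes it below -/
import Mathlib

section
/- For an almost paracontact metric structure (φ, ξ, η, g), the covariant derivative of φ with respect to the Levi-Civita connection ∇ satisfies 2g((∇_X φ)Y, Z) = −dF(X,Y,Z) − dF(X, φY, φZ) − g(N^(1)(Y,Z), φX) + N^(2)(Y,Z)η(X) − 2dη(φZ, X)η(Y) + 2dη(φY, X)η(Z). For a paracontact metric structure this simplifies to 2g((∇_X φ)Y, Z) = −g(N^(1)(Y,Z), φX) − 2dη(φZ, X)η(Y) + 2dη(φY, X)η(Z). -/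
/-!
An abstract formalization of (almost) paracontact metric geometry.

We axiomatize the algebra `C` of smooth functions (a commutative `ℝ`-algebra),
the `C`-module `V` of vector fields together with the derivation action of
vector fields on functions and the Lie bracket, a pseudo-Riemannian metric `g`
with its Levi-Civita connection `nabla` (characterized by being torsion-free
and metric), and the almost paracontact structure tensors `(φ, ξ, η)`.
Traces (Ricci and scalar curvatures, square norms of tensors) are computed with
respect to a `φ`-basis `(eᵢ, φ eᵢ, ξ)`, `i = 1, …, n`, adapted to the signature
`(n+1, n)`.
-/

noncomputable section

/-- Abstract calculus of vector fields: an `ℝ`-algebra `C` of "smooth functions",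
a `C`-module `V` of "vector fields", the derivation action `act` of vector fields
on functions, and the Lie bracket. -/
structure VectorFieldCalculus (C V : Type*) [CommRing C] [Algebra ℝ C]
    [AddCommGroup V] [Module C V] [Module ℝ V] [IsScalarTower ℝ C V] where
  act : V → C → C
  act_add_left : ∀ X Y f, act (X + Y) f = act X f + act Y f
  act_smul_left : ∀ (f : C) (X : V) (u : C), act (f • X) u = f * act X u
  act_add_right : ∀ X f g, act X (f + g) = act X f + act X g
  act_mul : ∀ X f g, act X (f * g) = f * act X g + g * act X f
  act_algebraMap : ∀ X (r : ℝ), act X (algebraMap ℝ C r) = 0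
  bracket : V → V → V
  bracket_antisymm : ∀ X Y, bracket X Y = - bracket Y X
  bracket_add_left : ∀ X Y Z, bracket (X + Y) Z = bracket X Z + bracket Y Z
  bracket_act : ∀ X Y f, act (bracket X Y) f = act X (act Y f) - act Y (act X f)
  bracket_smul_right : ∀ X (f : C) Y, bracket X (f • Y) = act X f • Y + f • bracket X Y
  jacobi : ∀ X Y Z,
    bracket X (bracket Y Z) + bracket Y (bracket Z X) + bracket Z (bracket X Y) = 0

/-- An almost paracontact structure `(φ, ξ, η)`: `φ ξ = 0`, `η ∘ φ = 0`,
`η(ξ) = 1` and `φ² = id − η ⊗ ξ`. -/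
structure AlmostParacontact (C V : Type*) [CommRing C] [Algebra ℝ C]
    [AddCommGroup V] [Module C V] [Module ℝ V] [IsScalarTower ℝ C V]
    extends VectorFieldCalculus C V where
  phi : V → V
  phi_add : ∀ X Y, phi (X + Y) = phi X + phi Y
  phi_smul : ∀ (f : C) X, phi (f • X) = f • phi X
  xi : V
  eta : V → C
  eta_add : ∀ X Y, eta (X + Y) = eta X + eta Y
  eta_smul : ∀ (f : C) X, eta (f • X) = f * eta X
  phi_xi : phi xi = 0
  eta_phi : ∀ X, eta (phi X) = 0
  eta_xi : eta xi = 1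
  phi_phi : ∀ X, phi (phi X) = X - eta X • xi

namespace AlmostParacontact

variable {C V : Type*} [CommRing C] [Algebra ℝ C]
  [AddCommGroup V] [Module C V] [Module ℝ V] [IsScalarTower ℝ C V]
  (P : AlmostParacontact C V)

/-- `2 dη(X,Y) = X(η Y) − Y(η X) − η [X,Y]`. -/
def twoDEta (X Y : V) : C :=
  P.act X (P.eta Y) - P.act Y (P.eta X) - P.eta (P.bracket X Y)

/-- `dη(X,Y) = ½ (X(η Y) − Y(η X) − η [X,Y])`. -/
def dEta (X Y : V) : C := (2⁻¹ : ℝ) • P.twoDEta X Y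

/-- The Nijenhuis tensor of `φ`. -/
def Nphi (X Y : V) : V :=
  P.bracket (P.phi X) (P.phi Y) - P.phi (P.bracket (P.phi X) Y)
    - P.phi (P.bracket X (P.phi Y)) + P.bracket X Y

/-- `N⁽¹⁾(X,Y) = N_φ(X,Y) − 2 dη(X,Y) ξ`. -/
def N1 (X Y : V) : V := P.Nphi X Y - P.twoDEta X Y • P.xi

/-- `(L_X η)(Y)`. -/
def lieEta (X Y : V) : C := P.act X (P.eta Y) - P.eta (P.bracket X Y)

/-- `N⁽²⁾(X,Y) = (L_{φX} η)Y − (L_{φY} η)X`. -/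
def N2 (X Y : V) : C := P.lieEta (P.phi X) Y - P.lieEta (P.phi Y) X

/-- `N⁽³⁾(X) = (L_ξ φ)X`. -/
def N3 (X : V) : V := P.bracket P.xi (P.phi X) - P.phi (P.bracket P.xi X)

/-- `N⁽⁴⁾(X) = (L_ξ η)X`. -/
def N4 (X : V) : C := P.lieEta P.xi X

/-- Integrability of the paracomplex structure `φ` on `D = ker η`:
`N_φ(X,Y) = 0` and `[φX, Y] + [X, φY] ∈ D` for `X, Y ∈ D`. -/
def IsIntegrable : Prop :=
  (∀ X Y, P.eta X = 0 → P.eta Y = 0 → P.Nphi X Y = 0) ∧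
  (∀ X Y, P.eta X = 0 → P.eta Y = 0 →
    P.eta (P.bracket (P.phi X) Y + P.bracket X (P.phi Y)) = 0)

end AlmostParacontact

/-- An almost paracontact metric structure on a `(2n+1)`-dimensional manifold:
a compatible metric `g` of signature `(n+1, n)` (encoded by a `φ`-basis
`(eᵢ, φ eᵢ, ξ)`), together with its Levi-Civita connection. -/
structure AlmostParacontactMetric (n : ℕ) (C V : Type*) [CommRing C] [Algebra ℝ C]
    [AddCommGroup V] [Module C V] [Module ℝ V] [IsScalarTower ℝ C V]
    extends AlmostParacontact C V where
  g : V → V → C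
  g_symm : ∀ X Y, g X Y = g Y X
  g_add_left : ∀ X Y Z, g (X + Y) Z = g X Z + g Y Z
  g_smul_left : ∀ (f : C) X Y, g (f • X) Y = f * g X Y
  g_nondeg : ∀ X, (∀ Y, g X Y = 0) → X = 0
  compatible : ∀ X Y, g (phi X) (phi Y) = - g X Y + eta X * eta Y
  nabla : V → V → V
  nabla_add_left : ∀ X Y Z, nabla (X + Y) Z = nabla X Z + nabla Y Z
  nabla_smul_left : ∀ (f : C) X Y, nabla (f • X) Y = f • nabla X Y
  nabla_add_right : ∀ X Y Z, nabla X (Y + Z) = nabla X Y + nabla X Z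
  nabla_smul_right : ∀ X (f : C) Y, nabla X (f • Y) = act X f • Y + f • nabla X Y
  torsion_free : ∀ X Y, nabla X Y - nabla Y X = bracket X Y
  nabla_metric : ∀ X Y Z, act X (g Y Z) = g (nabla X Y) Z + g Y (nabla X Z)
  frame : Fin n → V
  frame_orth : ∀ i j, g (frame i) (frame j) = if i = j then 1 else 0
  frame_phi : ∀ i j, g (frame i) (phi (frame j)) = 0
  frame_xi : ∀ i, g (frame i) xi = 0

namespace AlmostParacontactMetric

variable {n : ℕ} {C V : Type*} [CommRing C] [Algebra ℝ C]
  [AddCommGroup V] [Module C V] [Module ℝ V] [IsScalarTower ℝ C V]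
  (P : AlmostParacontactMetric n C V)

/-- The fundamental 2-form `F(X,Y) = g(X, φY)`. -/
def F (X Y : V) : C := P.g X (P.phi Y)

/-- The exterior differential of the fundamental 2-form. -/
def dF (X Y Z : V) : C :=
  P.act X (P.F Y Z) + P.act Y (P.F Z X) + P.act Z (P.F X Y)
    - P.F (P.bracket X Y) Z - P.F (P.bracket Z X) Y - P.F (P.bracket Y Z) X

/-- `(∇_X φ)Y`. -/
def nablaPhi (X Y : V) : V := P.nabla X (P.phi Y) - P.phi (P.nabla X Y)

/-- `h = ½ L_ξ φ`. -/
def h (X : V) : V := (2⁻¹ : ℝ) • P.toAlmostParacontact.N3 X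

/-- `ξ` is a Killing vector field: `L_ξ g = 0`. -/
def IsKilling : Prop :=
  ∀ X Y, P.act P.xi (P.g X Y) - P.g (P.bracket P.xi X) Y - P.g X (P.bracket P.xi Y) = 0

/-- The curvature tensor `R(X,Y)Z = ∇_X ∇_Y Z − ∇_Y ∇_X Z − ∇_{[X,Y]} Z`. -/
def R (X Y Z : V) : V :=
  P.nabla X (P.nabla Y Z) - P.nabla Y (P.nabla X Z) - P.nabla (P.bracket X Y) Z

/-- The (0,4)-curvature tensor `R(X,Y,Z,W) = g(R(X,Y)Z, W)`. -/
def Rm (X Y Z W : V) : C := P.g (P.R X Y Z) W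

/-- The signed contraction `∑_a ε_a f(E_a)` over the `φ`-basis
`(eᵢ, φ eᵢ, ξ)` with signs `(+1, −1, +1)`. -/
def ctr (f : V → C) : C :=
  (∑ i : Fin n, f (P.frame i)) - (∑ i : Fin n, f (P.phi (P.frame i))) + f P.xi

/-- The Ricci tensor. -/
def Ric (X Y : V) : C := P.ctr fun E => P.Rm E X Y E

/-- The scalar curvature. -/
def scal : C := P.ctr fun E => P.Ric E E

/-- The *-Ricci tensor `Ric*_{ij} = g^{ps} R_{pilk} φ^l_j φ^k_s`. -/
def RicStar (X Y : V) : C := P.ctr fun E => P.Rm E X (P.phi Y) (P.phi E)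

/-- The *-scalar curvature. -/
def scalStar : C := P.ctr fun E => P.RicStar E E

/-- The square norm `|A|² = ∑ ε_a ε_b g(A E_a, E_b)²` of a (1,1)-tensor. -/
def normSqOp (A : V → V) : C := P.ctr fun E => P.ctr fun E' => (P.g (A E) E') ^ 2

/-- The tensor `P_{rsi} = ∇_r φ_{si} − η_i g_{rs} + η_s g_{ri}`. -/
def Pten (X Y Z : V) : C :=
  P.g Y (P.nablaPhi X Z) - P.eta Z * P.g X Y + P.eta Y * P.g X Z

/-- The square norm `|P|²`. -/
def normSqP : C := P.ctr fun A => P.ctr fun B => P.ctr fun I => (P.Pten A B I) ^ 2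

/-- `|P(X)|² = P_{rsi} P^{rs}_j X^i X^j`. -/
def normSqPX (X : V) : C := P.ctr fun A => P.ctr fun B => (P.Pten A B X) ^ 2

/-- The square norm `|∇φ|²`. -/
def normSqNablaPhi : C :=
  P.ctr fun A => P.ctr fun B => P.ctr fun I => (P.g B (P.nablaPhi A I)) ^ 2

/-- The paracontact condition `g(X, φY) = dη(X,Y)`. -/
def IsParacontact : Prop := ∀ X Y, P.g X (P.phi Y) = P.toAlmostParacontact.dEta X Y

/-- Normality: `N⁽¹⁾ = 0`. -/
def IsNormal : Prop := ∀ X Y, P.toAlmostParacontact.N1 X Y = 0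

/-- The canonical paracontact connection
`∇̃_X Y = ∇_X Y + η(X) φY − η(Y) ∇_X ξ + (∇_X η)(Y) ξ`. -/
def can (X Y : V) : V :=
  P.nabla X Y + P.eta X • P.phi Y - P.eta Y • P.nabla X P.xi
    + (P.act X (P.eta Y) - P.eta (P.nabla X Y)) • P.xi

/-- The torsion of the canonical paracontact connection. -/
def canTor (X Y : V) : V := P.can X Y - P.can Y X - P.bracket X Y

/-- `D` is a linear connection on `V`. -/
def IsConnection (D : V → V → V) : Prop :=
  (∀ X Y Z, D (X + Y) Z = D X Z + D Y Z) ∧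
  (∀ (f : C) X Y, D (f • X) Y = f • D X Y) ∧
  (∀ X Y Z, D X (Y + Z) = D X Y + D X Z) ∧
  (∀ X (f : C) Y, D X (f • Y) = P.act X f • Y + f • D X Y)

/-- `D` is almost paracontact: `Dg = Dη = Dφ = 0`. -/
def PreservesStructure (D : V → V → V) : Prop :=
  (∀ X Y Z, P.act X (P.g Y Z) = P.g (D X Y) Z + P.g Y (D X Z)) ∧
  (∀ X Y, P.act X (P.eta Y) = P.eta (D X Y)) ∧
  (∀ X Y, D X (P.phi Y) = P.phi (D X Y))

/-- The torsion 3-tensor `T(X,Y,Z) = g(D_X Y − D_Y X − [X,Y], Z)` of a connection. -/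
def torsion (D : V → V → V) (X Y Z : V) : C := P.g (D X Y - D Y X - P.bracket X Y) Z

/-- The torsion of `D` is a 3-form (totally skew-symmetric). -/
def HasSkewTorsion (D : V → V → V) : Prop :=
  ∀ X Y Z, P.torsion D X Y Z = - P.torsion D X Z Y

/-- An almost paracontact linear connection with totally skew-symmetric torsion. -/
def AdmissibleConnection (D : V → V → V) : Prop :=
  P.IsConnection D ∧ P.PreservesStructure D ∧ P.HasSkewTorsion D

/-- The 3-form `T = 2 η ∧ dη + d^φ F − N⁽¹⁾ + η ∧ (ξ ⌟ N⁽¹⁾)`. -/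
def Ttor (X Y Z : V) : C :=
  2 * (P.eta X * P.toAlmostParacontact.dEta Y Z
      + P.eta Y * P.toAlmostParacontact.dEta Z X
      + P.eta Z * P.toAlmostParacontact.dEta X Y)
    - P.dF (P.phi X) (P.phi Y) (P.phi Z)
    - P.g (P.toAlmostParacontact.N1 X Y) Z
    + P.eta X * P.g (P.toAlmostParacontact.N1 P.xi Y) Z
    + P.eta Y * P.g (P.toAlmostParacontact.N1 P.xi Z) X
    + P.eta Z * P.g (P.toAlmostParacontact.N1 P.xi X) Y

/-- The gradient of a function, w.r.t. the `φ`-basis. -/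
def grad (f : C) : V :=
  (∑ i : Fin n, P.act (P.frame i) f • P.frame i)
    - (∑ i : Fin n, P.act (P.phi (P.frame i)) f • P.phi (P.frame i))
    + P.act P.xi f • P.xi

/-- The (hyperbolic) Laplacian `Δ f = ∑ ε_a (E_a(E_a f) − (∇_{E_a} E_a) f)`. -/
def lap (f : C) : C := P.ctr fun E => P.act E (P.act E f) - P.act (P.nabla E E) f

/-- The sub-Laplacian `Δ_D f = Δ f − ξ(ξ f)`. -/
def lapD (f : C) : C := P.lap f - P.act P.xi (P.act P.xi f)

/-- `|df|²`. -/
def normSqdf (f : C) : C := P.ctr fun E => (P.act E f) ^ 2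

/-- `|df|²_D = |df|² − (ξ f)²`. -/
def normSqdfD (f : C) : C := P.normSqdf f - (P.act P.xi f) ^ 2

/-- The scalar curvature of the canonical paracontact connection,
`W₁ = scal − Ric(ξ,ξ) − 4n`. -/
def W1 : C := P.scal - P.Ric P.xi P.xi - ((4 * n : ℕ) : C)

end AlmostParacontactMetric


section Aux
namespace AlmostParacontactMetric

variable {n : ℕ} {C V : Type*} [CommRing C] [Algebra ℝ C]
  [AddCommGroup V] [Module C V] [Module ℝ V] [IsScalarTower ℝ C V]
  (P : AlmostParacontactMetric n C V)

lemma g_add_right' (X Y Z : V) : P.g X (Y + Z) = P.g X Y + P.g X Z := by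
  rw [P.g_symm, P.g_add_left, P.g_symm, P.g_symm Z]

lemma g_smul_right' (f : C) (X Y : V) : P.g X (f • Y) = f * P.g X Y := by
  rw [P.g_symm, P.g_smul_left, P.g_symm]

lemma g_zero_left' (Y : V) : P.g 0 Y = 0 := by
  have := P.g_smul_left 0 0 Y; simpa using this

lemma g_zero_right' (Y : V) : P.g Y 0 = 0 := by
  rw [P.g_symm]; exact P.g_zero_left' Y

lemma g_neg_left' (X Y : V) : P.g (-X) Y = - P.g X Y := by
  have h := P.g_add_left X (-X) Y
  simp only [add_neg_cancel, P.g_zero_left'] at h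
  linear_combination -h

lemma g_neg_right' (X Y : V) : P.g X (-Y) = - P.g X Y := by
  rw [P.g_symm, P.g_neg_left', P.g_symm]

lemma g_sub_left' (X Y Z : V) : P.g (X - Y) Z = P.g X Z - P.g Y Z := by
  rw [sub_eq_add_neg, P.g_add_left, P.g_neg_left', sub_eq_add_neg]

lemma g_sub_right' (X Y Z : V) : P.g X (Y - Z) = P.g X Y - P.g X Z := by
  rw [P.g_symm, P.g_sub_left', P.g_symm, P.g_symm Z]

lemma eta_zero' : P.eta 0 = 0 := by
  have := P.eta_smul 0 0; simpa using this

lemma eta_neg' (X : V) : P.eta (-X) = - P.eta X := by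
  have h := P.eta_add X (-X)
  simp only [add_neg_cancel, P.eta_zero'] at h
  linear_combination -h

lemma eta_sub' (X Y : V) : P.eta (X - Y) = P.eta X - P.eta Y := by
  rw [sub_eq_add_neg, P.eta_add, P.eta_neg', sub_eq_add_neg]

lemma phi_zero' : P.phi 0 = 0 := by
  have := P.phi_smul 0 0; simpa using this

lemma phi_neg' (X : V) : P.phi (-X) = - P.phi X := by
  have := P.phi_smul (-1) X; simpa using this

lemma phi_sub' (X Y : V) : P.phi (X - Y) = P.phi X - P.phi Y := by
  rw [sub_eq_add_neg, P.phi_add, P.phi_neg', sub_eq_add_neg]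

lemma act_zero' (X : V) : P.act X 0 = 0 := by
  have := P.act_algebraMap X 0; simpa using this

lemma act_neg' (X : V) (f : C) : P.act X (-f) = - P.act X f := by
  have h := P.act_add_right X f (-f)
  simp only [add_neg_cancel, P.act_zero'] at h
  linear_combination -h

lemma act_sub' (X : V) (f g : C) : P.act X (f - g) = P.act X f - P.act X g := by
  rw [sub_eq_add_neg, P.act_add_right, P.act_neg', sub_eq_add_neg]

lemma act_rsmul' (X : V) (r : ℝ) (f : C) : P.act X (r • f) = r • P.act X f := by
  rw [Algebra.smul_def, Algebra.smul_def, P.act_mul]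
  simp [P.act_algebraMap]

lemma g_xi_right' (X : V) : P.g X P.xi = P.eta X := by
  have h := P.compatible X P.xi
  rw [P.phi_xi, P.g_zero_right', P.eta_xi, mul_one] at h
  linear_combination h

lemma g_xi_left' (X : V) : P.g P.xi X = P.eta X := by
  rw [P.g_symm]; exact P.g_xi_right' X

lemma g_phi_left' (X Y : V) : P.g (P.phi X) Y = - P.g X (P.phi Y) := by
  have h := P.compatible X (P.phi Y)
  rw [P.eta_phi, mul_zero, add_zero, P.phi_phi, P.g_sub_right', P.g_smul_right',
    P.g_xi_right', P.eta_phi, mul_zero, sub_zero] at h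
  exact h

lemma twoDEta_eq' (A B : V) :
    (2 : C) * P.toAlmostParacontact.dEta A B = P.toAlmostParacontact.twoDEta A B := by
  rw [AlmostParacontact.dEta]
  have h : (algebraMap ℝ C) (2 : ℝ) = (2 : C) := map_ofNat _ 2
  rw [← h, ← Algebra.smul_def, smul_smul]
  norm_num

lemma koszul' (X Y Z : V) :
    2 * P.g (P.nabla X Y) Z =
      P.act X (P.g Y Z) + P.act Y (P.g Z X) - P.act Z (P.g X Y)
        + P.g (P.bracket X Y) Z - P.g Y (P.bracket X Z) - P.g X (P.bracket Y Z) := by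
  have hA := P.nabla_metric X Y Z
  have hB := P.nabla_metric Y Z X
  have hC := P.nabla_metric Z X Y
  have t1 : P.g (P.nabla X Y) Z - P.g (P.nabla Y X) Z = P.g (P.bracket X Y) Z := by
    rw [← P.g_sub_left', P.torsion_free]
  have t2 : P.g Y (P.nabla X Z) - P.g Y (P.nabla Z X) = P.g Y (P.bracket X Z) := by
    rw [← P.g_sub_right', P.torsion_free]
  have t3 : P.g X (P.nabla Y Z) - P.g X (P.nabla Z Y) = P.g X (P.bracket Y Z) := by
    rw [← P.g_sub_right', P.torsion_free]
  linear_combination -hA - hB + hC + t1 - t2 - t3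
    - P.g_symm (P.nabla Y Z) X - P.g_symm Z (P.nabla Y X) + P.g_symm (P.nabla Z X) Y


lemma gbr' (A B W : V) : P.g (P.bracket A B) W = P.g W (P.bracket A B) :=
  P.g_symm _ _

lemma main1 (X Y Z : V) :
    (2 : C) * P.g (P.nablaPhi X Y) Z =
      - P.dF X Y Z - P.dF X (P.phi Y) (P.phi Z)
        - P.g (P.toAlmostParacontact.N1 Y Z) (P.phi X)
        + P.toAlmostParacontact.N2 Y Z * P.eta X
        - (2 : C) * P.toAlmostParacontact.dEta (P.phi Z) X * P.eta Y
        + (2 : C) * P.toAlmostParacontact.dEta (P.phi Y) X * P.eta Z := by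
  have e1 : (2 : C) * P.g (P.nablaPhi X Y) Z =
      2 * P.g (P.nabla X (P.phi Y)) Z + 2 * P.g (P.nabla X Y) (P.phi Z) := by
    rw [nablaPhi, P.g_sub_left', P.g_phi_left']; ring
  rw [e1, P.koszul' X (P.phi Y) Z, P.koszul' X Y (P.phi Z)]
  rw [show (2 : C) * P.toAlmostParacontact.dEta (P.phi Z) X * P.eta Y
      = (2 : C) * P.toAlmostParacontact.dEta (P.phi Z) X * P.eta Y from rfl,
    mul_assoc (2:C) (P.toAlmostParacontact.dEta (P.phi Z) X)]
  rw [show (2 : C) * (P.toAlmostParacontact.dEta (P.phi Z) X * P.eta Y)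
      = ((2 : C) * P.toAlmostParacontact.dEta (P.phi Z) X) * P.eta Y by ring,
    P.twoDEta_eq',
    show (2 : C) * P.toAlmostParacontact.dEta (P.phi Y) X * P.eta Z
      = ((2 : C) * P.toAlmostParacontact.dEta (P.phi Y) X) * P.eta Z by ring,
    P.twoDEta_eq']
  simp only [dF, F, AlmostParacontact.N1, AlmostParacontact.Nphi,
    AlmostParacontact.twoDEta, AlmostParacontact.N2, AlmostParacontact.lieEta]
  simp only [P.bracket_antisymm Z X, P.bracket_antisymm (P.phi Z) X,
    P.bracket_antisymm (P.phi Z) Y, P.bracket_antisymm (P.phi Y) X]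
  simp only [P.g_phi_left', P.phi_phi, P.phi_xi, P.phi_add, P.phi_sub', P.phi_neg',
    P.phi_smul, P.phi_zero', P.g_add_left, P.g_add_right', P.g_sub_left',
    P.g_sub_right', P.g_neg_left', P.g_neg_right', P.g_smul_left, P.g_smul_right',
    P.g_zero_left', P.g_zero_right', P.eta_add, P.eta_sub', P.eta_neg', P.eta_smul,
    P.eta_phi, P.eta_xi, P.eta_zero', P.g_xi_right', P.g_xi_left', P.act_add_right,
    P.act_sub', P.act_neg', P.act_mul, P.act_zero', P.gbr',
    zero_smul, smul_zero, zero_mul, mul_zero, sub_zero, zero_sub, add_zero,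
    zero_add, neg_zero, mul_one, one_mul, neg_neg]
  ring


lemma dtwoDEta_zero' (X Y Z : V) :
    P.act X (P.toAlmostParacontact.twoDEta Y Z)
      + P.act Y (P.toAlmostParacontact.twoDEta Z X)
      + P.act Z (P.toAlmostParacontact.twoDEta X Y)
      - P.toAlmostParacontact.twoDEta (P.bracket X Y) Z
      - P.toAlmostParacontact.twoDEta (P.bracket Z X) Y
      - P.toAlmostParacontact.twoDEta (P.bracket Y Z) X = 0 := by
  have hJ := congrArg P.eta (P.jacobi X Y Z)
  simp only [P.eta_add, P.eta_zero'] at hJ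
  simp only [AlmostParacontact.twoDEta,
    P.bracket_antisymm (P.bracket X Y) Z, P.bracket_antisymm (P.bracket Z X) Y,
    P.bracket_antisymm (P.bracket Y Z) X, P.eta_neg', P.act_neg',
    P.bracket_act, P.act_sub', P.act_add_right]
  linear_combination -hJ

lemma dF_pc' (h : P.IsParacontact) (X Y Z : V) : P.dF X Y Z = 0 := by
  have hh : ∀ A B : V, P.g A (P.phi B) = P.toAlmostParacontact.dEta A B := h
  simp only [dF, F, hh, AlmostParacontact.dEta, Algebra.smul_def, P.act_mul,
    P.act_algebraMap, mul_zero, add_zero, zero_add]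
  linear_combination (algebraMap ℝ C 2⁻¹) * P.dtwoDEta_zero' X Y Z

lemma N2_pc' (h : P.IsParacontact) (Y Z : V) : P.toAlmostParacontact.N2 Y Z = 0 := by
  have e : ∀ A B : V, P.toAlmostParacontact.lieEta (P.phi A) B
      = 2 * P.g (P.phi A) (P.phi B) := by
    intro A B
    rw [h (P.phi A) B, P.twoDEta_eq']
    simp [AlmostParacontact.lieEta, AlmostParacontact.twoDEta, P.eta_phi, P.act_zero']
  rw [AlmostParacontact.N2, e, e]
  linear_combination 2 * P.g_symm (P.phi Y) (P.phi Z)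

end AlmostParacontactMetric
end Aux

/-- The covariant derivative of `φ` for an almost paracontact
metric structure, and its simplification in the paracontact metric case. -/
theorem covariant_derivative_of_phi
    {n : ℕ} {C V : Type*} [CommRing C] [Algebra ℝ C] [AddCommGroup V] [Module C V]
    [Module ℝ V] [IsScalarTower ℝ C V]
    (P : AlmostParacontactMetric n C V) :
    (∀ X Y Z, (2 : C) * P.g (P.nablaPhi X Y) Z =
        - P.dF X Y Z - P.dF X (P.phi Y) (P.phi Z)
          - P.g (P.toAlmostParacontact.N1 Y Z) (P.phi X)
          + P.toAlmostParacontact.N2 Y Z * P.eta X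
          - (2 : C) * P.toAlmostParacontact.dEta (P.phi Z) X * P.eta Y
          + (2 : C) * P.toAlmostParacontact.dEta (P.phi Y) X * P.eta Z) ∧
    (P.IsParacontact →
      ∀ X Y Z, (2 : C) * P.g (P.nablaPhi X Y) Z =
        - P.g (P.toAlmostParacontact.N1 Y Z) (P.phi X)
          - (2 : C) * P.toAlmostParacontact.dEta (P.phi Z) X * P.eta Y
          + (2 : C) * P.toAlmostParacontact.dEta (P.phi Y) X * P.eta Z) := by
  refine ⟨P.main1, fun h X Y Z => ?_⟩
  rw [P.main1 X Y Z, P.dF_pc' h X Y Z, P.dF_pc' h X (P.phi Y) (P.phi Z),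
    P.N2_pc' h Y Z]
  ring
end
end

section
/- On a paracontact metric manifold the following identity holds for all vector fields X, Y: (∇_{φX} φ)(φY) − (∇_X φ)Y = 2g(X,Y)ξ − (X − hX + η(X)ξ)η(Y). -/
/-!
An abstract formalization of (almost) paracontact metric geometry.

We axiomatize the algebra `C` of smooth functions (a commutative `ℝ`-algebra),
the `C`-module `V` of vector fields together with the derivation action of
vector fields on functions and the Lie bracket, a pseudo-Riemannian metric `g`
with its Levi-Civita connection `nabla` (characterized by being torsion-free
and metric), and the almost paracontact structure tensors `(φ, ξ, η)`.
Traces (Ricci and scalar curvatures, square norms of tensors) are computed with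
respect to a `φ`-basis `(eᵢ, φ eᵢ, ξ)`, `i = 1, …, n`, adapted to the signature
`(n+1, n)`.
-/

noncomputable section

section Aux

variable {n : ℕ} {C V : Type*} [CommRing C] [Algebra ℝ C]
  [AddCommGroup V] [Module C V] [Module ℝ V] [IsScalarTower ℝ C V]
  (P : AlmostParacontactMetric n C V)

lemma pm_half_cancel {C : Type*} [CommRing C] [Algebra ℝ C] {a b : C}
    (h : 2 * a = 2 * b) : a = b := by
  have h1 : (2:ℝ) • a = (2:ℝ) • b := by
    rw [Algebra.smul_def, Algebra.smul_def, map_ofNat]; exact h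
  calc a = (2⁻¹:ℝ) • ((2:ℝ) • a) := by
        rw [smul_smul, show (2⁻¹ * 2 : ℝ) = 1 by norm_num, one_smul]
    _ = (2⁻¹:ℝ) • ((2:ℝ) • b) := by rw [h1]
    _ = b := by rw [smul_smul, show (2⁻¹ * 2 : ℝ) = 1 by norm_num, one_smul]

lemma pm_two_smul_half (u : C) : (2:C) * ((2⁻¹:ℝ) • u) = u := by
  rw [Algebra.smul_def, show ((2:C)) = algebraMap ℝ C 2 from (map_ofNat (algebraMap ℝ C) 2).symm,
    ← mul_assoc, ← map_mul, show (2 * 2⁻¹ : ℝ) = 1 by norm_num, map_one, one_mul]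

-- act lemmas
lemma pm_act_one (X : V) : P.act X (1 : C) = 0 := by
  have h := P.act_algebraMap X 1; rwa [map_one] at h
lemma pm_act_two (X : V) : P.act X (2 : C) = 0 := by
  have h := P.act_algebraMap X 2; rwa [map_ofNat] at h
lemma pm_act_zero_fun (X : V) : P.act X (0 : C) = 0 := by
  have h := P.act_algebraMap X 0; rwa [map_zero] at h
lemma pm_act_negone (X : V) : P.act X (-1 : C) = 0 := by
  have h := P.act_algebraMap X (-1); rwa [map_neg, map_one] at h
lemma pm_act_neg_right (X : V) (f : C) : P.act X (-f) = - P.act X f := by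
  rw [show -f = (-1:C) * f by ring, P.act_mul, pm_act_negone]; ring
lemma pm_act_sub_right (X : V) (f g : C) : P.act X (f - g) = P.act X f - P.act X g := by
  rw [sub_eq_add_neg, P.act_add_right, pm_act_neg_right]; ring
lemma pm_act_two_mul (X : V) (f : C) : P.act X (2 * f) = 2 * P.act X f := by
  rw [P.act_mul, pm_act_two]; ring
lemma pm_act_neg_left (X : V) (f : C) : P.act (-X) f = - P.act X f := by
  rw [← neg_one_smul C X, P.act_smul_left]; ring
lemma pm_act_sub_left (X Y : V) (f : C) : P.act (X - Y) f = P.act X f - P.act Y f := by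
  rw [sub_eq_add_neg, P.act_add_left, pm_act_neg_left]; ring
lemma pm_act_zero_left (f : C) : P.act (0 : V) f = 0 := by
  simpa using P.act_smul_left 0 0 f

-- g lemmas
lemma pm_g_neg_left (X Y : V) : P.g (-X) Y = - P.g X Y := by
  rw [← neg_one_smul C X, P.g_smul_left]; ring
lemma pm_g_sub_left (X Y Z : V) : P.g (X - Y) Z = P.g X Z - P.g Y Z := by
  rw [sub_eq_add_neg, P.g_add_left, pm_g_neg_left]; ring
lemma pm_g_zero_left (Y : V) : P.g 0 Y = 0 := by
  simpa using P.g_smul_left 0 0 Y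
lemma pm_g_add_right (X Y Z : V) : P.g X (Y + Z) = P.g X Y + P.g X Z := by
  rw [P.g_symm X (Y + Z), P.g_add_left, P.g_symm Y X, P.g_symm Z X]
lemma pm_g_smul_right (f : C) (X Y : V) : P.g X (f • Y) = f * P.g X Y := by
  rw [P.g_symm X (f • Y), P.g_smul_left, P.g_symm Y X]
lemma pm_g_neg_right (X Y : V) : P.g X (-Y) = - P.g X Y := by
  rw [← neg_one_smul C Y, pm_g_smul_right]; ring
lemma pm_g_sub_right (X Y Z : V) : P.g X (Y - Z) = P.g X Y - P.g X Z := by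
  rw [sub_eq_add_neg, pm_g_add_right, pm_g_neg_right]; ring
lemma pm_g_zero_right (X : V) : P.g X 0 = 0 := by
  rw [P.g_symm, pm_g_zero_left]
lemma pm_g_rsmul (r : ℝ) (W Z : V) : P.g (r • W) Z = r • P.g W Z := by
  rw [← smul_one_smul C r W, P.g_smul_left, smul_one_mul]

-- eta/phi lemmas
lemma pm_eta_neg (X : V) : P.eta (-X) = - P.eta X := by
  rw [← neg_one_smul C X, P.eta_smul]; ring
lemma pm_eta_sub (X Y : V) : P.eta (X - Y) = P.eta X - P.eta Y := by
  rw [sub_eq_add_neg, P.eta_add, pm_eta_neg]; ring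
lemma pm_eta_zero : P.eta (0 : V) = 0 := by
  simpa using P.eta_smul 0 0
lemma pm_phi_neg (X : V) : P.phi (-X) = - P.phi X := by
  rw [← neg_one_smul C X, P.phi_smul, neg_one_smul]
lemma pm_phi_sub (X Y : V) : P.phi (X - Y) = P.phi X - P.phi Y := by
  rw [sub_eq_add_neg, P.phi_add, pm_phi_neg, sub_eq_add_neg]
lemma pm_phi_zero : P.phi (0 : V) = 0 := by
  simpa using P.phi_smul 0 0

-- bracket lemmas
lemma pm_bracket_add_right (X Y Z : V) : P.bracket X (Y + Z) = P.bracket X Y + P.bracket X Z := by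
  rw [P.bracket_antisymm X (Y + Z), P.bracket_add_left, P.bracket_antisymm Y X,
    P.bracket_antisymm Z X]
  abel
lemma pm_bracket_neg_right (X Y : V) : P.bracket X (-Y) = - P.bracket X Y := by
  simpa [pm_act_negone] using P.bracket_smul_right X (-1) Y
lemma pm_bracket_sub_right (X Y Z : V) : P.bracket X (Y - Z) = P.bracket X Y - P.bracket X Z := by
  rw [sub_eq_add_neg, pm_bracket_add_right, pm_bracket_neg_right, sub_eq_add_neg]
lemma pm_bracket_smul_left (f : C) (X Y : V) :
    P.bracket (f • X) Y = f • P.bracket X Y - P.act Y f • X := by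
  rw [P.bracket_antisymm (f • X) Y, P.bracket_smul_right, P.bracket_antisymm Y X]
  rw [neg_add, smul_neg, neg_neg, sub_eq_add_neg, add_comm]
lemma pm_bracket_neg_left (X Y : V) : P.bracket (-X) Y = - P.bracket X Y := by
  rw [P.bracket_antisymm (-X) Y, pm_bracket_neg_right, P.bracket_antisymm Y X, neg_neg]
lemma pm_bracket_sub_left (X Y Z : V) : P.bracket (X - Y) Z = P.bracket X Z - P.bracket Y Z := by
  rw [sub_eq_add_neg, P.bracket_add_left, pm_bracket_neg_left, sub_eq_add_neg]
lemma pm_bracket_zero_right (X : V) : P.bracket X (0 : V) = 0 := by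
  simpa [pm_act_zero_fun] using P.bracket_smul_right X 0 0
lemma pm_bracket_zero_left (X : V) : P.bracket (0 : V) X = 0 := by
  rw [P.bracket_antisymm, pm_bracket_zero_right, neg_zero]

-- xi / phi metric lemmas
lemma pm_g_xi_right (X : V) : P.g X P.xi = P.eta X := by
  have h := P.compatible X P.xi
  rw [P.phi_xi, pm_g_zero_right, P.eta_xi, mul_one] at h
  linear_combination h
lemma pm_g_xi_left (X : V) : P.g P.xi X = P.eta X := by
  rw [P.g_symm, pm_g_xi_right]
lemma pm_g_phi_move (X Y : V) : P.g (P.phi X) Y = - P.g X (P.phi Y) := by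
  have h := P.compatible X (P.phi Y)
  rw [P.phi_phi, P.eta_phi, mul_zero, pm_g_sub_right, pm_g_smul_right, pm_g_xi_right,
    P.eta_phi, mul_zero, sub_zero, add_zero] at h
  exact h

end Aux
section Aux2

variable {n : ℕ} {C V : Type*} [CommRing C] [Algebra ℝ C]
  [AddCommGroup V] [Module C V] [Module ℝ V] [IsScalarTower ℝ C V]
  (P : AlmostParacontactMetric n C V)

lemma pm_g_phi_skew (A B : V) : P.g A (P.phi B) = - P.g B (P.phi A) := by
  rw [← pm_g_phi_move, P.g_symm]

lemma pm_two_gphi (hP : P.IsParacontact) (X Y : V) :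
    2 * P.g X (P.phi Y) =
      P.act X (P.eta Y) - P.act Y (P.eta X) - P.eta (P.bracket X Y) := by
  have h := hP X Y
  simp only [AlmostParacontact.dEta, AlmostParacontact.twoDEta] at h
  rw [h, pm_two_smul_half]

lemma pm_eta_bracket (hP : P.IsParacontact) (X Y : V) :
    P.eta (P.bracket X Y) =
      P.act X (P.eta Y) - P.act Y (P.eta X) - 2 * P.g X (P.phi Y) := by
  linear_combination pm_two_gphi P hP X Y

lemma pm_koszul (X Y Z : V) : 2 * P.g (P.nabla X Y) Z =
    P.act X (P.g Y Z) + P.act Y (P.g X Z) - P.act Z (P.g X Y)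
      + P.g (P.bracket X Y) Z - P.g (P.bracket Y Z) X + P.g (P.bracket Z X) Y := by
  have m1 := P.nabla_metric X Y Z
  have m2 := P.nabla_metric Y X Z
  have m3 := P.nabla_metric Z X Y
  have s1 : P.g (P.nabla X Y) Z - P.g (P.nabla Y X) Z = P.g (P.bracket X Y) Z := by
    rw [← pm_g_sub_left, P.torsion_free]
  have s2 : P.g Y (P.nabla X Z) - P.g Y (P.nabla Z X) = P.g Y (P.bracket X Z) := by
    rw [← pm_g_sub_right, P.torsion_free]
  have s3 : P.g X (P.nabla Y Z) - P.g X (P.nabla Z Y) = P.g X (P.bracket Y Z) := by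
    rw [← pm_g_sub_right, P.torsion_free]
  have sy1 := P.g_symm (P.nabla Z X) Y
  have sy2 := P.g_symm (P.bracket Y Z) X
  have sy3 : P.g (P.bracket Z X) Y = - P.g Y (P.bracket X Z) := by
    rw [P.bracket_antisymm Z X, pm_g_neg_left, P.g_symm]
  linear_combination (-1 : C) * m1 - m2 + m3 + s1 - s2 - s3 + sy1 + sy2 - sy3

lemma pm_koszulPhi (A B Cv : V) : 2 * P.g (P.nablaPhi A B) Cv =
    (P.act A (P.g (P.phi B) Cv) + P.act (P.phi B) (P.g A Cv) - P.act Cv (P.g A (P.phi B))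
      + P.g (P.bracket A (P.phi B)) Cv - P.g (P.bracket (P.phi B) Cv) A
      + P.g (P.bracket Cv A) (P.phi B))
    + (P.act A (P.g B (P.phi Cv)) + P.act B (P.g A (P.phi Cv)) - P.act (P.phi Cv) (P.g A B)
      + P.g (P.bracket A B) (P.phi Cv) - P.g (P.bracket B (P.phi Cv)) A
      + P.g (P.bracket (P.phi Cv) A) B) := by
  have k1 := pm_koszul P A (P.phi B) Cv
  have k2 := pm_koszul P A B (P.phi Cv)
  have mv := pm_g_phi_move P (P.nabla A B) Cv
  rw [AlmostParacontactMetric.nablaPhi, pm_g_sub_left, mul_sub, mv]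
  linear_combination k1 + k2

lemma pm_two_g_h (X Z : V) : 2 * P.g (P.h X) Z =
    P.g (P.bracket P.xi (P.phi X)) Z + P.g (P.bracket P.xi X) (P.phi Z) := by
  rw [AlmostParacontactMetric.h, AlmostParacontact.N3, pm_g_rsmul, pm_two_smul_half,
    pm_g_sub_left, pm_g_phi_move]
  ring

lemma pm_ddeta (hP : P.IsParacontact) (A B Cc : V) :
    P.act A (P.g B (P.phi Cc)) - P.act B (P.g A (P.phi Cc)) + P.act Cc (P.g A (P.phi B))
      - P.g (P.bracket A B) (P.phi Cc) + P.g (P.bracket A Cc) (P.phi B)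
      - P.g (P.bracket B Cc) (P.phi A) = 0 := by
  apply pm_half_cancel (C := C)
  rw [mul_zero]
  have t1 : P.act A (2 * P.g B (P.phi Cc)) =
      P.act A (P.act B (P.eta Cc)) - P.act A (P.act Cc (P.eta B))
        - P.act A (P.eta (P.bracket B Cc)) := by
    rw [pm_two_gphi P hP B Cc, pm_act_sub_right, pm_act_sub_right]
  have t2 : P.act B (2 * P.g A (P.phi Cc)) =
      P.act B (P.act A (P.eta Cc)) - P.act B (P.act Cc (P.eta A))
        - P.act B (P.eta (P.bracket A Cc)) := by
    rw [pm_two_gphi P hP A Cc, pm_act_sub_right, pm_act_sub_right]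
  have t3 : P.act Cc (2 * P.g A (P.phi B)) =
      P.act Cc (P.act A (P.eta B)) - P.act Cc (P.act B (P.eta A))
        - P.act Cc (P.eta (P.bracket A B)) := by
    rw [pm_two_gphi P hP A B, pm_act_sub_right, pm_act_sub_right]
  have t1' : 2 * P.act A (P.g B (P.phi Cc)) = P.act A (2 * P.g B (P.phi Cc)) :=
    (pm_act_two_mul P A _).symm
  have t2' : 2 * P.act B (P.g A (P.phi Cc)) = P.act B (2 * P.g A (P.phi Cc)) :=
    (pm_act_two_mul P B _).symm
  have t3' : 2 * P.act Cc (P.g A (P.phi B)) = P.act Cc (2 * P.g A (P.phi B)) :=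
    (pm_act_two_mul P Cc _).symm
  have u1 := pm_two_gphi P hP (P.bracket A B) Cc
  have u2 := pm_two_gphi P hP (P.bracket A Cc) B
  have u3 := pm_two_gphi P hP (P.bracket B Cc) A
  have b1 := P.bracket_act A B (P.eta Cc)
  have b2 := P.bracket_act A Cc (P.eta B)
  have b3 := P.bracket_act B Cc (P.eta A)
  have hj := congrArg P.eta (P.jacobi A B Cc)
  rw [P.eta_add, P.eta_add, pm_eta_zero] at hj
  have a1 : P.eta (P.bracket (P.bracket A B) Cc) = - P.eta (P.bracket Cc (P.bracket A B)) := by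
    rw [P.bracket_antisymm (P.bracket A B) Cc, pm_eta_neg]
  have a2 : P.eta (P.bracket (P.bracket A Cc) B) = P.eta (P.bracket B (P.bracket Cc A)) := by
    rw [P.bracket_antisymm (P.bracket A Cc) B, P.bracket_antisymm A Cc, pm_bracket_neg_right,
      pm_eta_neg, pm_eta_neg, neg_neg]
  have a3 : P.eta (P.bracket (P.bracket B Cc) A) = - P.eta (P.bracket A (P.bracket B Cc)) := by
    rw [P.bracket_antisymm (P.bracket B Cc) A, pm_eta_neg]
  linear_combination t1' + t1 - t2' - t2 + t3' + t3 - u1 + u2 - u3 - b1 + b2 - b3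
    + a1 - a2 + a3 - hj

end Aux2
set_option maxHeartbeats 4000000 in
/-- On a paracontact metric manifold,
`(∇_{φX} φ)(φY) − (∇_X φ)Y = 2g(X,Y) ξ − (X − hX + η(X) ξ) η(Y)`. -/
theorem nablaPhi_phiX_phiY_identity
    {n : ℕ} {C V : Type*} [CommRing C] [Algebra ℝ C] [AddCommGroup V] [Module C V]
    [Module ℝ V] [IsScalarTower ℝ C V]
    (P : AlmostParacontactMetric n C V) (hP : P.IsParacontact) :
    ∀ X Y, P.nablaPhi (P.phi X) (P.phi Y) - P.nablaPhi X Y =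
      ((2 : C) * P.g X Y) • P.xi - P.eta Y • (X - P.h X + P.eta X • P.xi) := by
  intro X Y
  have hsub : ∀ W1 W2 : V, (∀ Z : V, P.g (W1 - W2) Z = 0) → W1 = W2 := by
    intro W1 W2 hz
    exact sub_eq_zero.mp (P.g_nondeg _ hz)
  apply hsub
  intro Z
  rw [pm_g_sub_left, sub_eq_zero]
  apply pm_half_cancel (C := C)
  apply pm_half_cancel (C := C)
  have ebr := pm_eta_bracket P hP
  have e1 := pm_koszulPhi P (P.phi X) (P.phi Y) Z
  have e2 := pm_koszulPhi P X Y Z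
  have r1 := pm_ddeta P hP X Y Z
  have r2 := pm_ddeta P hP X (P.phi Y) (P.phi Z)
  have r3 := pm_ddeta P hP Y (P.phi X) (P.phi Z)
  have r4 := pm_ddeta P hP Z (P.phi X) (P.phi Y)
  have j := P.jacobi X P.xi Z
  have j1 : P.g (P.bracket X (P.bracket P.xi Z) + P.bracket P.xi (P.bracket Z X)
      + P.bracket Z (P.bracket X P.xi)) Y = 0 := by rw [j, pm_g_zero_left]
  have j2 : P.g (P.bracket X (P.bracket P.xi Z) + P.bracket P.xi (P.bracket Z X)
      + P.bracket Z (P.bracket X P.xi)) (P.phi (P.phi Y)) = 0 := by rw [j, pm_g_zero_left]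
  have hh := pm_two_g_h P X Z
  have gR : 2 * P.g (((2:C) * P.g X Y) • P.xi - P.eta Y • (X - P.h X + P.eta X • P.xi)) Z =
      4 * P.g X Y * P.eta Z - 2 * (P.eta Y * P.g X Z)
        + P.eta Y * P.g (P.bracket P.xi (P.phi X)) Z
        + P.eta Y * P.g (P.bracket P.xi X) (P.phi Z)
        - 2 * (P.eta X * P.eta Y * P.eta Z) := by
    simp only [pm_g_sub_left, P.g_add_left, P.g_smul_left, pm_g_xi_left]
    linear_combination P.eta Y * hh
  have o1 : P.bracket P.xi X = - P.bracket X P.xi := P.bracket_antisymm _ _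
  have o2 : P.bracket Z X = - P.bracket X Z := P.bracket_antisymm _ _
  have o3 : P.bracket (P.phi X) P.xi = - P.bracket P.xi (P.phi X) := P.bracket_antisymm _ _
  have o4 : P.bracket (P.phi X) Y = - P.bracket Y (P.phi X) := P.bracket_antisymm _ _
  have o5 : P.bracket (P.phi Y) Z = - P.bracket Z (P.phi Y) := P.bracket_antisymm _ _
  have o6 : P.bracket (P.phi Z) X = - P.bracket X (P.phi Z) := P.bracket_antisymm _ _
  have o7 : P.bracket (P.phi Z) (P.phi X) = - P.bracket (P.phi X) (P.phi Z) :=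
    P.bracket_antisymm _ _
  have o8 : P.g Y X = P.g X Y := P.g_symm _ _
  have o9 : P.g Z X = P.g X Z := P.g_symm _ _
  have o10 : P.g Z Y = P.g Y Z := P.g_symm _ _
  have o11 : P.g (P.bracket X (P.bracket P.xi Z)) Y
      = P.g Y (P.bracket X (P.bracket P.xi Z)) := P.g_symm _ _
  have o12 : P.g (P.bracket X (P.phi Y)) Z = P.g Z (P.bracket X (P.phi Y)) := P.g_symm _ _
  have o13 : P.g (P.bracket X (P.phi Z)) Y = P.g Y (P.bracket X (P.phi Z)) := P.g_symm _ _
  have o14 : P.g (P.bracket P.xi (P.bracket X Z)) Y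
      = P.g Y (P.bracket P.xi (P.bracket X Z)) := P.g_symm _ _
  have o15 : P.g (P.bracket P.xi (P.phi X)) Z = P.g Z (P.bracket P.xi (P.phi X)) := P.g_symm _ _
  have o16 : P.g (P.bracket Y (P.phi X)) Z = P.g Z (P.bracket Y (P.phi X)) := P.g_symm _ _
  have o17 : P.g (P.bracket Y (P.phi Z)) X = P.g X (P.bracket Y (P.phi Z)) := P.g_symm _ _
  have o18 : P.g (P.bracket Z (P.bracket X P.xi)) Y
      = P.g Y (P.bracket Z (P.bracket X P.xi)) := P.g_symm _ _
  have o19 : P.g (P.bracket Z (P.phi X)) Y = P.g Y (P.bracket Z (P.phi X)) := P.g_symm _ _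
  have o20 : P.g (P.bracket Z (P.phi Y)) X = P.g X (P.bracket Z (P.phi Y)) := P.g_symm _ _
  have o21 : P.g (P.bracket X P.xi) (P.phi Z) = - P.g Z (P.phi (P.bracket X P.xi)) :=
    pm_g_phi_skew P _ _
  have o22 : P.g (P.bracket X Y) (P.phi Z) = - P.g Z (P.phi (P.bracket X Y)) :=
    pm_g_phi_skew P _ _
  have o23 : P.g (P.bracket X Z) (P.phi Y) = - P.g Y (P.phi (P.bracket X Z)) :=
    pm_g_phi_skew P _ _
  have o24 : P.g (P.bracket P.xi Z) (P.phi X) = - P.g X (P.phi (P.bracket P.xi Z)) :=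
    pm_g_phi_skew P _ _
  have o25 : P.g (P.bracket Y Z) (P.phi X) = - P.g X (P.phi (P.bracket Y Z)) :=
    pm_g_phi_skew P _ _
  have o26 : P.g (P.bracket (P.phi X) (P.phi Y)) (P.phi Z)
      = - P.g Z (P.phi (P.bracket (P.phi X) (P.phi Y))) := pm_g_phi_skew P _ _
  have o27 : P.g (P.bracket (P.phi X) (P.phi Z)) (P.phi Y)
      = - P.g Y (P.phi (P.bracket (P.phi X) (P.phi Z))) := pm_g_phi_skew P _ _
  have o28 : P.g (P.bracket (P.phi Y) (P.phi Z)) (P.phi X)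
      = - P.g X (P.phi (P.bracket (P.phi Y) (P.phi Z))) := pm_g_phi_skew P _ _
  simp only [P.phi_add, P.phi_smul, P.phi_phi, P.phi_xi, pm_phi_neg, pm_phi_sub, pm_phi_zero,
    P.eta_add, P.eta_smul, P.eta_phi, P.eta_xi, pm_eta_neg, pm_eta_sub, pm_eta_zero,
    ebr,
    P.bracket_add_left, pm_bracket_add_right, P.bracket_smul_right, pm_bracket_smul_left,
    pm_bracket_neg_left, pm_bracket_neg_right, pm_bracket_sub_left, pm_bracket_sub_right,
    pm_bracket_zero_left, pm_bracket_zero_right,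
    o1, o2, o3, o4, o5, o6, o7,
    P.g_add_left, P.g_smul_left, pm_g_add_right, pm_g_smul_right, pm_g_neg_left, pm_g_neg_right,
    pm_g_sub_left, pm_g_sub_right, pm_g_zero_left, pm_g_zero_right, pm_g_xi_left, pm_g_xi_right,
    pm_g_phi_move,
    o8, o9, o10, o11, o12, o13, o14, o15, o16, o17, o18, o19, o20, o21, o22, o23, o24, o25,
    o26, o27, o28,
    P.act_add_left, P.act_smul_left, P.act_add_right, P.act_mul, P.bracket_act,
    pm_act_one, pm_act_two, pm_act_zero_fun, pm_act_neg_right, pm_act_sub_right,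
    pm_act_neg_left, pm_act_sub_left, pm_act_zero_left,
    mul_zero, zero_mul, add_zero, zero_add, sub_zero, zero_sub, neg_zero, neg_neg,
    mul_one, one_mul, mul_neg, neg_mul, smul_zero, zero_smul, sub_self]
    at e1 e2 r1 r2 r3 r4 j1 j2 gR ⊢
  linear_combination 2*e1 - 2*e2 - 2*gR + 2*r1 + 2*r2 + 2*r3 - 2*r4 + j1 - j2
end
end
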